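/- arXiv:2411.00675 — 2 statements merged into one kernel-verified Lean document; each statement's English description precedes it below -/
import Mathlib

section
/- The 5×8 integer matrix whose nonzero block structure is [[I₄, 0, 0, 0], [0, 2, a+2, 0], [0, 0, 0, 3], [0, 0, 0, a+1]] (with a final zero row), where I₄ is the 4×4 identity, has nonzero invariant factors 1, 1, 1, 1, 1, gcd(6, 2(a+1), 3(a+2), (a+1)(a+2)) (up to sign). Hence the torsion of its cokernel is cyclic of order gcd(6, 2(a+1), 3(a+2), (a+1)(a+2)). -/
set_option maxHeartbeats 1600000
set_option maxRecDepth 2000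


/-- The matrix `M₇` from the paper (case `b = 4`): block form
`[[I₄, 0], [0, (2, a+2, 0)], [0, (0, 0, 3)], [0, (0, 0, a+1)], [0, 0]]`. -/
def matB4 (a : ℕ) : Matrix (Fin 8) (Fin 7) ℤ :=
  Matrix.of fun i j =>
    if (i : ℕ) = (j : ℕ) ∧ (i : ℕ) < 4 then 1
    else if (i : ℕ) = 4 ∧ (j : ℕ) = 4 then 2
    else if (i : ℕ) = 4 ∧ (j : ℕ) = 5 then (a : ℤ) + 2
    else if (i : ℕ) = 5 ∧ (j : ℕ) = 6 then 3
    else if (i : ℕ) = 6 ∧ (j : ℕ) = 6 then (a : ℤ) + 1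
    else 0

/-- `gcd(6, 2(a+1), 3(a+2), (a+1)(a+2))`. -/
def gcdB4 (a : ℕ) : ℕ :=
  Nat.gcd 6 (Nat.gcd (2 * (a + 1)) (Nat.gcd (3 * (a + 2)) ((a + 1) * (a + 2))))

/-- Smith normal form target: diagonal `1, 1, 1, 1, 1, gcdB4 a, 0`. -/
def snfB4 (a : ℕ) : Matrix (Fin 8) (Fin 7) ℤ :=
  Matrix.of fun i j =>
    if (i : ℕ) = (j : ℕ) ∧ (i : ℕ) < 5 then 1
    else if (i : ℕ) = (j : ℕ) ∧ (i : ℕ) = 5 then (gcdB4 a : ℤ)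
    else 0


lemma gcd_add6 (A x m : ℕ) (h : A ∣ 6) : Nat.gcd A (x + 6 * m) = Nat.gcd A x := by
  obtain ⟨e, he⟩ := h
  rw [show x + 6 * m = x + A * (e * m) by rw [← mul_assoc, ← he], Nat.gcd_add_mul_left_right]

lemma gcdB4_mod (k r : ℕ) : gcdB4 (6 * k + r) = gcdB4 r := by
  unfold gcdB4
  rw [show 2 * (6 * k + r + 1) = 2 * (r + 1) + 6 * (2 * k) by ring,
      show 3 * (6 * k + r + 2) = 3 * (r + 2) + 6 * (3 * k) by ring,
      show (6 * k + r + 1) * (6 * k + r + 2)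
          = (r + 1) * (r + 2) + 6 * (6 * k * k + 2 * k * r + 3 * k) by ring]
  rw [← Nat.gcd_assoc, ← Nat.gcd_assoc]
  conv_rhs => rw [← Nat.gcd_assoc, ← Nat.gcd_assoc]
  rw [gcd_add6 _ _ _ (dvd_trans (Nat.gcd_dvd_left _ _) (Nat.gcd_dvd_left _ _))]
  congr 1
  rw [gcd_add6 _ _ _ (Nat.gcd_dvd_left _ _)]
  congr 1
  rw [gcd_add6 _ _ _ dvd_rfl]

lemma gmul (a : ℕ) : Nat.gcd 3 (a + 1) * Nat.gcd 2 (a + 2) = gcdB4 a := by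
  obtain ⟨k, r, hr6, rfl⟩ : ∃ k r, r < 6 ∧ a = 6 * k + r :=
    ⟨a / 6, a % 6, Nat.mod_lt _ (by norm_num), by omega⟩
  rw [show 6 * k + r + 1 = (r + 1) + 2 * k * 3 by ring, Nat.gcd_add_mul_right_right,
      show 6 * k + r + 2 = (r + 2) + 3 * k * 2 by ring, Nat.gcd_add_mul_right_right,
      gcdB4_mod]
  interval_cases r <;> rfl

def Pm (g1 u v q p : ℤ) : Matrix (Fin 8) (Fin 8) ℤ :=
  Matrix.of fun i j =>
    if (i : ℕ) = (j : ℕ) ∧ ((i : ℕ) < 4 ∨ (i : ℕ) = 7) then 1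
    else if (i : ℕ) = 4 ∧ ((j : ℕ) = 4 ∨ (j : ℕ) = 5) then 1
    else if (i : ℕ) = 5 ∧ (j : ℕ) = 4 then g1
    else if (i : ℕ) = 5 ∧ (j : ℕ) = 5 then g1 - u
    else if (i : ℕ) = 5 ∧ (j : ℕ) = 6 then -v
    else if (i : ℕ) = 6 ∧ (j : ℕ) = 5 then -q
    else if (i : ℕ) = 6 ∧ (j : ℕ) = 6 then p
    else 0

def Pinvm (a : ℕ) (u v q p : ℤ) : Matrix (Fin 8) (Fin 8) ℤ :=
  Matrix.of fun i j =>
    if (i : ℕ) = (j : ℕ) ∧ ((i : ℕ) < 4 ∨ (i : ℕ) = 7) then 1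
    else if (i : ℕ) = 4 ∧ (j : ℕ) = 4 then -2
    else if (i : ℕ) = 4 ∧ (j : ℕ) = 5 then p
    else if (i : ℕ) = 4 ∧ (j : ℕ) = 6 then v
    else if (i : ℕ) = 5 ∧ (j : ℕ) = 4 then 3
    else if (i : ℕ) = 5 ∧ (j : ℕ) = 5 then -p
    else if (i : ℕ) = 5 ∧ (j : ℕ) = 6 then -v
    else if (i : ℕ) = 6 ∧ (j : ℕ) = 4 then (a : ℤ) + 1
    else if (i : ℕ) = 6 ∧ (j : ℕ) = 5 then -q
    else if (i : ℕ) = 6 ∧ (j : ℕ) = 6 then u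
    else 0

def Qm (g2 s t w z : ℤ) : Matrix (Fin 7) (Fin 7) ℤ :=
  Matrix.of fun i j =>
    if (i : ℕ) = (j : ℕ) ∧ (i : ℕ) < 4 then 1
    else if (i : ℕ) = 4 ∧ (j : ℕ) = 4 then -1
    else if (i : ℕ) = 4 ∧ (j : ℕ) = 5 then t + g2
    else if (i : ℕ) = 4 ∧ (j : ℕ) = 6 then w
    else if (i : ℕ) = 5 ∧ (j : ℕ) = 5 then s
    else if (i : ℕ) = 5 ∧ (j : ℕ) = 6 then -z
    else if (i : ℕ) = 6 ∧ (j : ℕ) = 4 then 1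
    else if (i : ℕ) = 6 ∧ (j : ℕ) = 5 then -g2
    else 0

def Qinvm (a : ℕ) (s t w z : ℤ) : Matrix (Fin 7) (Fin 7) ℤ :=
  Matrix.of fun i j =>
    if (i : ℕ) = (j : ℕ) ∧ (i : ℕ) < 4 then 1
    else if (i : ℕ) = 4 ∧ (j : ℕ) = 4 then 2
    else if (i : ℕ) = 4 ∧ (j : ℕ) = 5 then (a : ℤ) + 2
    else if (i : ℕ) = 4 ∧ (j : ℕ) = 6 then 3
    else if (i : ℕ) = 5 ∧ ((j : ℕ) = 4 ∨ (j : ℕ) = 6) then z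
    else if (i : ℕ) = 5 ∧ (j : ℕ) = 5 then w
    else if (i : ℕ) = 6 ∧ ((j : ℕ) = 4 ∨ (j : ℕ) = 6) then s
    else if (i : ℕ) = 6 ∧ (j : ℕ) = 5 then -t
    else 0

lemma Pm_mul_inv (a : ℕ) (g1 u v q p : ℤ)
    (h1 : 3*u + ((a:ℤ)+1)*v = g1) (h2 : g1*p = 3) (h3 : g1*q = (a:ℤ)+1)
    (hup : u*p + v*q = 1) :
    Pm g1 u v q p * Pinvm a u v q p = 1 := by
  ext i j
  fin_cases i <;> fin_cases j <;>
    simp (config := { decide := true }) [Pm, Pinvm, Matrix.mul_apply, Fin.sum_univ_eight, Matrix.one_apply] <;>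
    first
      | ring1
      | linear_combination h1
      | linear_combination -h1
      | linear_combination hup
      | linear_combination -hup
      | linear_combination q*h2 - p*h3
      | linear_combination p*h3 - q*h2

lemma Qm_mul_inv (a : ℕ) (g2 s t w z : ℤ)
    (h4 : ((a:ℤ)+2)*s + 2*t = g2) (h5 : g2*w = (a:ℤ)+2) (h6 : g2*z = 2)
    (hsw : s*w + t*z = 1) :
    Qm g2 s t w z * Qinvm a s t w z = 1 := by
  ext i j
  fin_cases i <;> fin_cases j <;>
    simp (config := { decide := true }) [Qm, Qinvm, Matrix.mul_apply, Fin.sum_univ_seven, Matrix.one_apply] <;>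
    first
      | ring1
      | linear_combination hsw + h6
      | linear_combination -(hsw + h6)
      | linear_combination h5
      | linear_combination -h5
      | linear_combination h6
      | linear_combination -h6
      | linear_combination hsw
      | linear_combination -hsw
      | linear_combination h4
      | linear_combination -h4

lemma keyeq (a : ℕ) (g1 u v q p g2 s t w z : ℤ)
    (h1 : 3*u + ((a:ℤ)+1)*v = g1) (h2 : g1*p = 3) (h3 : g1*q = (a:ℤ)+1)
    (h4 : ((a:ℤ)+2)*s + 2*t = g2) (h5 : g2*w = (a:ℤ)+2) (h6 : g2*z = 2)
    (hg : g1*g2 = (gcdB4 a : ℤ)) :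
    Pm g1 u v q p * matB4 a * Qm g2 s t w z = snfB4 a := by
  ext i j
  fin_cases i <;> fin_cases j <;>
    simp (config := { decide := true }) [Pm, Qm, matB4, snfB4, Matrix.mul_apply,
      Fin.sum_univ_eight, Fin.sum_univ_seven] <;>
    first
      | ring1
      | linear_combination h4
      | linear_combination -h4
      | linear_combination z*h5 - w*h6
      | linear_combination w*h6 - z*h5
      | linear_combination q*h2 - p*h3
      | linear_combination p*h3 - q*h2
      | linear_combination g1*h4 + hg
      | linear_combination -(g1*h4 + hg)
      | linear_combination g1*h4 - hg
      | linear_combination hg - g1*h4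
      | linear_combination h1
      | linear_combination -h1
      | linear_combination w*h1
      | linear_combination -(w*h1)
      | linear_combination (t+g2)*h1 + g1*h4 - hg
      | linear_combination (t+g2)*h1 + g1*h4 + hg
      | linear_combination -((t+g2)*h1) + g1*h4 + hg
      | linear_combination (t + 2*g2)*h1
      | linear_combination -((t + 2*g2)*h1)
      | linear_combination (t+g2)*h1 - g1*h4 - hg + g1*z*h5 - g1*w*h6
      | linear_combination -((t+g2)*h1 - g1*h4 - hg + g1*z*h5 - g1*w*h6)
      | linear_combination g1*h4 + g2*h1 + hg
      | linear_combination -(g1*h4 + g2*h1 + hg)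
      | linear_combination g1*z*h5 - g1*w*h6
      | linear_combination g1*w*h6 - g1*z*h5
      | (refine Or.inl ?_; linear_combination q*h2 - p*h3)
      | (refine Or.inl ?_; linear_combination p*h3 - q*h2)


lemma snf_mulVec_five (a : ℕ) (w : Fin 7 → ℤ) :
    (snfB4 a).mulVec w 5 = (gcdB4 a : ℤ) * w 5 := by
  simp (config := { decide := true }) [snfB4, Matrix.mulVec, dotProduct, Fin.sum_univ_seven]

lemma snf_mulVec_six (a : ℕ) (w : Fin 7 → ℤ) : (snfB4 a).mulVec w 6 = 0 := by
  simp (config := { decide := true }) [snfB4, Matrix.mulVec, dotProduct, Fin.sum_univ_seven]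

lemma snf_mulVec_seven (a : ℕ) (w : Fin 7 → ℤ) : (snfB4 a).mulVec w 7 = 0 := by
  simp (config := { decide := true }) [snfB4, Matrix.mulVec, dotProduct, Fin.sum_univ_seven]

noncomputable def torsionCongr {M N : Type} [AddCommGroup M] [AddCommGroup N]
    (e : M ≃ₗ[ℤ] N) :
    (Submodule.torsion ℤ M) ≃ₗ[ℤ] (Submodule.torsion ℤ N) :=
  LinearEquiv.ofSubmodules e _ _ (by
    ext y
    simp only [Submodule.mem_map]
    constructor
    · rintro ⟨x, hx, rfl⟩
      obtain ⟨c, hc⟩ := hx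
      refine ⟨c, ?_⟩
      rw [Submonoid.smul_def] at hc ⊢
      simpa using congrArg e hc
    · rintro ⟨c, hc⟩
      refine ⟨e.symm y, ⟨c, ?_⟩, e.apply_symm_apply y⟩
      rw [Submonoid.smul_def] at hc ⊢
      simpa using congrArg e.symm hc)

noncomputable def torsionProd (g : ℕ) (hg : g ≠ 0) :
    (Submodule.torsion ℤ (ZMod g × ℤ × ℤ)) ≃ₗ[ℤ] ZMod g where
  toFun x := x.1.1
  map_add' x y := rfl
  map_smul' c x := rfl
  invFun c := ⟨(c, 0, 0), ⟨(g : ℤ), mem_nonZeroDivisors_of_ne_zero (by exact_mod_cast hg)⟩, by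
    refine Prod.ext ?_ (Prod.ext ?_ ?_) <;>
      simp [Submonoid.smul_def, zsmul_eq_mul]⟩
  left_inv := by
    rintro ⟨⟨x, y, z⟩, hx⟩
    obtain ⟨c, hc⟩ := hx
    rw [Submonoid.smul_def, Prod.smul_mk, Prod.smul_mk, Prod.mk_eq_zero, Prod.mk_eq_zero] at hc
    have hc0 : (c : ℤ) ≠ 0 := nonZeroDivisors.coe_ne_zero c
    have hy : y = 0 := by
      have h := hc.2.1; rw [smul_eq_mul] at h; exact (mul_eq_zero.mp h).resolve_left hc0
    have hz : z = 0 := by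
      have h := hc.2.2; rw [smul_eq_mul] at h; exact (mul_eq_zero.mp h).resolve_left hc0
    apply Subtype.ext
    simp [hy, hz]
  right_inv c := rfl

def projMap (g : ℕ) : (Fin 8 → ℤ) →ₗ[ℤ] (ZMod g × ℤ × ℤ) where
  toFun x := ((x 5 : ℤ) , x 6, x 7)
  map_add' x y := by
    refine Prod.ext ?_ (Prod.ext rfl rfl)
    show (((x + y) 5 : ℤ) : ZMod g) = ((x 5 : ℤ) : ZMod g) + ((y 5 : ℤ) : ZMod g)
    rw [Pi.add_apply]
    push_cast
    ring
  map_smul' c x := by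
    refine Prod.ext ?_ (Prod.ext rfl rfl)
    show ((c * x 5 : ℤ) : ZMod g) = c • ((x 5 : ℤ) : ZMod g)
    rw [zsmul_eq_mul]
    push_cast
    ring

theorem stmt_6 (a : ℕ) :
    (∃ (P : Matrix (Fin 8) (Fin 8) ℤ) (Q : Matrix (Fin 7) (Fin 7) ℤ),
      IsUnit P.det ∧ IsUnit Q.det ∧ P * matB4 a * Q = snfB4 a) ∧
    Nonempty
      ((Submodule.torsion ℤ
          ((Fin 8 → ℤ) ⧸ LinearMap.range (Matrix.mulVecLin (matB4 a)))) ≃ₗ[ℤ]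
        ZMod (gcdB4 a)) := by
  -- gcd data
  have hg1pos : 0 < Nat.gcd 3 (a+1) := Nat.gcd_pos_of_pos_left _ (by norm_num)
  have hg2pos : 0 < Nat.gcd 2 (a+2) := Nat.gcd_pos_of_pos_left _ (by norm_num)
  obtain ⟨pn, hpn⟩ := Nat.gcd_dvd_left 3 (a+1)
  obtain ⟨qn, hqn⟩ := Nat.gcd_dvd_right 3 (a+1)
  obtain ⟨zn, hzn⟩ := Nat.gcd_dvd_left 2 (a+2)
  obtain ⟨wn, hwn⟩ := Nat.gcd_dvd_right 2 (a+2)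
  obtain ⟨u, v, h1⟩ : ∃ u v : ℤ, 3*u + ((a:ℤ)+1)*v = (Nat.gcd 3 (a+1) : ℤ) := by
    refine ⟨Int.gcdA 3 ((a:ℤ)+1), Int.gcdB 3 ((a:ℤ)+1), ?_⟩
    have h := Int.gcd_eq_gcd_ab 3 ((a:ℤ)+1)
    have hcast : Int.gcd 3 ((a:ℤ)+1) = Nat.gcd 3 (a+1) := by
      rw [show ((a:ℤ)+1) = ((a+1:ℕ):ℤ) by push_cast; ring,
          show (3:ℤ) = ((3:ℕ):ℤ) by norm_num, Int.gcd_natCast_natCast]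
    rw [hcast] at h
    exact h.symm
  obtain ⟨s, t, h4⟩ : ∃ s t : ℤ, ((a:ℤ)+2)*s + 2*t = (Nat.gcd 2 (a+2) : ℤ) := by
    refine ⟨Int.gcdA ((a:ℤ)+2) 2, Int.gcdB ((a:ℤ)+2) 2, ?_⟩
    have h := Int.gcd_eq_gcd_ab ((a:ℤ)+2) 2
    have hcast : Int.gcd ((a:ℤ)+2) 2 = Nat.gcd 2 (a+2) := by
      rw [show ((a:ℤ)+2) = ((a+2:ℕ):ℤ) by push_cast; ring,
          show (2:ℤ) = ((2:ℕ):ℤ) by norm_num, Int.gcd_natCast_natCast, Nat.gcd_comm]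
    rw [hcast] at h
    exact h.symm
  have h2 : (Nat.gcd 3 (a+1) : ℤ) * (pn:ℤ) = 3 := by exact_mod_cast hpn.symm
  have h3 : (Nat.gcd 3 (a+1) : ℤ) * (qn:ℤ) = (a:ℤ)+1 := by exact_mod_cast hqn.symm
  have h5 : (Nat.gcd 2 (a+2) : ℤ) * (wn:ℤ) = (a:ℤ)+2 := by exact_mod_cast hwn.symm
  have h6 : (Nat.gcd 2 (a+2) : ℤ) * (zn:ℤ) = 2 := by exact_mod_cast hzn.symm
  have hg : (Nat.gcd 3 (a+1) : ℤ) * (Nat.gcd 2 (a+2) : ℤ) = (gcdB4 a : ℤ) := by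
    exact_mod_cast gmul a
  have hg1ne : (Nat.gcd 3 (a+1) : ℤ) ≠ 0 := by exact_mod_cast hg1pos.ne'
  have hg2ne : (Nat.gcd 2 (a+2) : ℤ) ≠ 0 := by exact_mod_cast hg2pos.ne'
  have hup : u*(pn:ℤ) + v*(qn:ℤ) = 1 := by
    apply mul_left_cancel₀ hg1ne
    linear_combination u*h2 + v*h3 + h1
  have hsw : s*(wn:ℤ) + t*(zn:ℤ) = 1 := by
    apply mul_left_cancel₀ hg2ne
    linear_combination s*h5 + t*h6 + h4
  have hPP : Pm (Nat.gcd 3 (a+1) : ℤ) u v (qn:ℤ) (pn:ℤ) * Pinvm a u v (qn:ℤ) (pn:ℤ) = 1 :=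
    Pm_mul_inv a (Nat.gcd 3 (a+1) : ℤ) u v (qn:ℤ) (pn:ℤ) h1 h2 h3 hup
  have hQQ : Qm (Nat.gcd 2 (a+2) : ℤ) s t (wn:ℤ) (zn:ℤ) * Qinvm a s t (wn:ℤ) (zn:ℤ) = 1 :=
    Qm_mul_inv a (Nat.gcd 2 (a+2) : ℤ) s t (wn:ℤ) (zn:ℤ) h4 h5 h6 hsw
  have key : Pm (Nat.gcd 3 (a+1) : ℤ) u v (qn:ℤ) (pn:ℤ) * matB4 a
      * Qm (Nat.gcd 2 (a+2) : ℤ) s t (wn:ℤ) (zn:ℤ) = snfB4 a :=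
    keyeq a (Nat.gcd 3 (a+1) : ℤ) u v (qn:ℤ) (pn:ℤ) (Nat.gcd 2 (a+2) : ℤ) s t (wn:ℤ) (zn:ℤ) h1 h2 h3 h4 h5 h6 hg
  set P := Pm (Nat.gcd 3 (a+1) : ℤ) u v (qn:ℤ) (pn:ℤ) with hPdef
  set Pinv := Pinvm a u v (qn:ℤ) (pn:ℤ) with hPinvdef
  set Q := Qm (Nat.gcd 2 (a+2) : ℤ) s t (wn:ℤ) (zn:ℤ) with hQdef
  set Qinv := Qinvm a s t (wn:ℤ) (zn:ℤ) with hQinvdef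
  have hPdet : IsUnit P.det := Matrix.isUnit_det_of_right_inverse hPP
  have hQdet : IsUnit Q.det := Matrix.isUnit_det_of_right_inverse hQQ
  refine ⟨⟨P, Q, hPdet, hQdet, key⟩, ?_⟩
  -- part 2
  have hPP' : Pinv * P = 1 := mul_eq_one_comm.mp hPP
  have hQQ' : Qinv * Q = 1 := mul_eq_one_comm.mp hQQ
  have hgne : gcdB4 a ≠ 0 := by
    have : 0 < gcdB4 a := Nat.gcd_pos_of_pos_left _ (by norm_num)
    omega
  set ψ : (Fin 8 → ℤ) →ₗ[ℤ] (ZMod (gcdB4 a) × ℤ × ℤ) :=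
    (projMap (gcdB4 a)).comp (Matrix.mulVecLin P) with hψdef
  have hψapp : ∀ x : Fin 8 → ℤ,
      ψ x = (((P.mulVec x 5 : ℤ) : ZMod (gcdB4 a)), P.mulVec x 6, P.mulVec x 7) := fun x => rfl
  have hsurj : Function.Surjective ψ := by
    rintro ⟨c, y, z⟩
    obtain ⟨m, rfl⟩ := ZMod.intCast_surjective c
    refine ⟨Pinv.mulVec (fun i : Fin 8 =>
      if (i:ℕ) = 5 then m else if (i:ℕ) = 6 then y else if (i:ℕ) = 7 then z else 0), ?_⟩
    rw [hψapp, Matrix.mulVec_mulVec, hPP, Matrix.one_mulVec]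
    simp (config := { decide := true })
  have hker : LinearMap.ker ψ = LinearMap.range (Matrix.mulVecLin (matB4 a)) := by
    ext x
    simp only [LinearMap.mem_ker, LinearMap.mem_range, Matrix.mulVecLin_apply]
    constructor
    · intro hx
      rw [hψapp] at hx
      have h5' : ((P.mulVec x 5 : ℤ) : ZMod (gcdB4 a)) = 0 := congrArg Prod.fst hx
      have h6' : P.mulVec x 6 = 0 := congrArg (fun p => p.2.1) hx
      have h7' : P.mulVec x 7 = 0 := congrArg (fun p => p.2.2) hx
      obtain ⟨c, hc⟩ := (ZMod.intCast_zmod_eq_zero_iff_dvd _ _).mp h5'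
      set w : Fin 7 → ℤ := fun j =>
        if (j:ℕ) = 0 then P.mulVec x 0 else if (j:ℕ) = 1 then P.mulVec x 1
        else if (j:ℕ) = 2 then P.mulVec x 2 else if (j:ℕ) = 3 then P.mulVec x 3
        else if (j:ℕ) = 4 then P.mulVec x 4 else if (j:ℕ) = 5 then c else 0 with hw
      have hS : (snfB4 a).mulVec w = P.mulVec x := by
        funext i
        fin_cases i <;>
          simp (config := { decide := true })
            [hw, snfB4, Matrix.mulVec, dotProduct, Fin.sum_univ_seven] <;>
          first
            | rfl
            | exact hc.symm
            | exact h6'.symm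
            | exact h7'.symm
      refine ⟨Q.mulVec w, ?_⟩
      have cancel : ∀ z : Fin 8 → ℤ, Pinv.mulVec (P.mulVec z) = z := by
        intro z; rw [Matrix.mulVec_mulVec, hPP', Matrix.one_mulVec]
      have hPx : P.mulVec ((matB4 a).mulVec (Q.mulVec w)) = P.mulVec x := by
        rw [Matrix.mulVec_mulVec, Matrix.mulVec_mulVec, key, hS]
      calc (matB4 a).mulVec (Q.mulVec w)
          = Pinv.mulVec (P.mulVec ((matB4 a).mulVec (Q.mulVec w))) := (cancel _).symm
        _ = Pinv.mulVec (P.mulVec x) := by rw [hPx]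
        _ = x := cancel _
    · rintro ⟨v', rfl⟩
      rw [hψapp]
      have hSQ : snfB4 a * Qinv = P * matB4 a := by
        rw [← key, Matrix.mul_assoc, hQQ, Matrix.mul_one]
      have hrw : P.mulVec ((matB4 a).mulVec v') = (snfB4 a).mulVec (Qinv.mulVec v') := by
        rw [Matrix.mulVec_mulVec, Matrix.mulVec_mulVec, hSQ]
      rw [hrw, snf_mulVec_five, snf_mulVec_six, snf_mulVec_seven]
      refine Prod.ext ?_ (Prod.ext rfl rfl)
      show (((gcdB4 a : ℤ) * (Qinv.mulVec v' 5) : ℤ) : ZMod (gcdB4 a)) = 0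
      push_cast
      simp [ZMod.natCast_self]
  have e1 : ((Fin 8 → ℤ) ⧸ LinearMap.range (Matrix.mulVecLin (matB4 a))) ≃ₗ[ℤ]
      (ZMod (gcdB4 a) × ℤ × ℤ) :=
    (Submodule.quotEquivOfEq _ _ hker.symm).trans (ψ.quotKerEquivOfSurjective hsurj)
  exact ⟨(torsionCongr e1).trans (torsionProd (gcdB4 a) hgne)⟩
end

section
/- Let μ = (a+1, b-1) be a partition with a+1 > b-1 and b ≥ 3, and let v_i = (a, 1^{i-2}, 2, 1^{b-i}) for 2 ≤ i ≤ b (content: a copies of 1, one copy each of 2,…,b except two copies of i). Then the number of standard tableaux of shape μ and content v_i equals b-1. -/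
/-!
Every entry of the second row lies below an entry of the first row, hence is at least `2`; so
the `a` ones of `vᵢ` fill the first row, which is `(1, …, 1, x)` with `x ∈ {2, …, b}`. A weakly
increasing row is determined by the multiset of its entries, so the tableau is determined by
`x`: its second row is the sorted multiset `vᵢ - {1^a, x}`. Conversely, for every such `x` this
filling is standard, because the `b - 1 ≤ a` cells of the second row all lie below ones.
-/

/-- A standard tableau of two-row shape `(μ₁, μ₂)` with entries in `{1, …, n}`:
rows weakly increase left to right, columns strictly increase top to bottom. -/
structure TwoRowStandardTableau (μ1 μ2 n : ℕ) where
  row1 : Fin μ1 → ℕ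
  row2 : Fin μ2 → ℕ
  row1_mem : ∀ p, 1 ≤ row1 p ∧ row1 p ≤ n
  row2_mem : ∀ p, 1 ≤ row2 p ∧ row2 p ≤ n
  row1_mono : Monotone row1
  row2_mono : Monotone row2
  col_strict : ∀ (p : Fin μ2) (h : (p : ℕ) < μ1), row1 ⟨(p : ℕ), h⟩ < row2 p

/-- The content of a tableau: the number of occurrences of the entry `k`. -/
def TwoRowStandardTableau.content {μ1 μ2 n : ℕ} (T : TwoRowStandardTableau μ1 μ2 n)
    (k : ℕ) : ℕ :=
  (Finset.univ.filter fun p => T.row1 p = k).card +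
    (Finset.univ.filter fun p => T.row2 p = k).card

open Finset

theorem Fin.eq_of_monotone_of_map_univ_eq {α : Type*} [LinearOrder α] {m : ℕ}
    {f g : Fin m → α} (hf : Monotone f) (hg : Monotone g)
    (h : univ.val.map f = univ.val.map g) : f = g := by
  rw [Fin.univ_val_map, Fin.univ_val_map, Multiset.coe_eq_coe] at h
  exact List.ofFn_injective (h.eq_of_pairwise' hf.sortedLE_ofFn.pairwise hg.sortedLE_ofFn.pairwise)

theorem Multiset.exists_monotone_fin_map_univ_eq {α : Type*} [LinearOrder α] (M : Multiset α)
    {m : ℕ} (hm : M.card = m) : ∃ f : Fin m → α, Monotone f ∧ univ.val.map f = M := by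
  subst hm
  rw [← M.length_sort (· ≤ ·)]
  refine ⟨(M.sort (· ≤ ·)).get, fun p q hpq => (M.pairwise_sort _).rel_get_of_le hpq, ?_⟩
  rw [Fin.univ_val_map, List.ofFn_get, Multiset.sort_eq]

def vContent (a b i : ℕ) : Multiset ℕ := Multiset.replicate a 1 + i ::ₘ (Icc 2 b).val

theorem count_vContent {a b i : ℕ} (hi : 2 ≤ i) (hib : i ≤ b) (k : ℕ) :
    (vContent a b i).count k =
      if k = 1 then a else if k = i then 2 else if 2 ≤ k ∧ k ≤ b then 1 else 0 := by
  simp only [vContent, Multiset.count_add, Multiset.count_replicate, Multiset.count_cons,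
    Multiset.count_eq_of_nodup (Icc 2 b).nodup, mem_val, mem_Icc]
  split_ifs <;> omega

namespace TwoRowStandardTableau

attribute [ext] TwoRowStandardTableau

variable {μ1 μ2 n : ℕ}

def entries (T : TwoRowStandardTableau μ1 μ2 n) : Multiset ℕ :=
  univ.val.map T.row1 + univ.val.map T.row2

theorem content_eq_count_entries (T : TwoRowStandardTableau μ1 μ2 n) (k : ℕ) :
    T.content k = T.entries.count k := by
  simp only [content, entries, Multiset.count_add, Multiset.count_map, eq_comm (a := k)]
  rfl

theorem one_lt_row2 (h : μ2 ≤ μ1) (T : TwoRowStandardTableau μ1 μ2 n) (p : Fin μ2) :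
    1 < T.row2 p :=
  (T.row1_mem _).1.trans_lt (T.col_strict p (p.2.trans_le h))

theorem count_one_map_row1 (h : μ2 ≤ μ1) (T : TwoRowStandardTableau μ1 μ2 n) :
    (univ.val.map T.row1).count 1 = T.entries.count 1 := by
  rw [entries, Multiset.count_add, left_eq_add, Multiset.count_eq_zero]
  simp only [Multiset.mem_map, not_exists, not_and]
  exact fun p _ => (T.one_lt_row2 h p).ne'

theorem eq_of_row1_eq_of_entries_eq {S T : TwoRowStandardTableau μ1 μ2 n}
    (h1 : S.row1 = T.row1) (he : S.entries = T.entries) : S = T := by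
  rw [entries, entries, h1] at he
  ext1
  · exact h1
  · exact Fin.eq_of_monotone_of_map_univ_eq S.row2_mono T.row2_mono (add_left_cancel he)

def onesThen (a x : ℕ) : Fin (a + 1) → ℕ := fun p => if (p : ℕ) < a then 1 else x

theorem monotone_onesThen {a x : ℕ} (hx : 1 ≤ x) : Monotone (onesThen a x) := by
  intro p q hpq
  have : (p : ℕ) ≤ q := hpq
  unfold onesThen
  split_ifs <;> omega

theorem map_univ_onesThen (a x : ℕ) :
    univ.val.map (onesThen a x) = x ::ₘ Multiset.replicate a 1 := by
  rw [Fin.univ_val_map, List.ofFn_succ']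
  simp [onesThen, ← Multiset.singleton_add, add_comm, ← Multiset.coe_add,
    Multiset.coe_replicate]

theorem row1_eq_onesThen {a : ℕ} (h : μ2 ≤ a + 1) (T : TwoRowStandardTableau (a + 1) μ2 n)
    (h1 : T.entries.count 1 = a) : T.row1 = onesThen a (T.row1 (Fin.last a)) := by
  have hle : #{p | T.row1 p ≤ 1} = T.entries.count 1 := by
    rw [← T.count_one_map_row1 h, Multiset.count_map, card_def, filter_val]
    congr 1
    refine Multiset.filter_congr fun p _ => ?_
    have := (T.row1_mem p).1
    omega
  rw [h1] at hle
  funext p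
  unfold onesThen
  split_ifs with hp
  · exact le_antisymm
      ((Tuple.lt_card_le_iff_apply_le_of_monotone T.row1_mono).1 (hle.symm ▸ hp))
      (T.row1_mem p).1
  · rw [Fin.eq_last_of_not_lt hp]

theorem eq_of_row1_last_eq {a : ℕ} (h : μ2 ≤ a + 1) {S T : TwoRowStandardTableau (a + 1) μ2 n}
    (he : S.entries = T.entries) (h1 : S.entries.count 1 = a)
    (hlast : S.row1 (Fin.last a) = T.row1 (Fin.last a)) : S = T := by
  refine eq_of_row1_eq_of_entries_eq ?_ he
  rw [row1_eq_onesThen h S h1, row1_eq_onesThen h T (he ▸ h1), hlast]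

variable {a b i : ℕ}

theorem content_eq_iff_entries_eq_vContent {μ1 μ2 : ℕ} (hi : 2 ≤ i) (hib : i ≤ b)
    (T : TwoRowStandardTableau μ1 μ2 n) :
    (∀ k, T.content k =
        if k = 1 then a else if k = i then 2 else if 2 ≤ k ∧ k ≤ b then 1 else 0) ↔
      T.entries = vContent a b i := by
  simp only [content_eq_count_entries, ← count_vContent hi hib, Multiset.ext]

theorem row1_last_mem_Icc (hμ : b - 1 ≤ a + 1) (hi : 2 ≤ i) (hib : i ≤ b)
    {T : TwoRowStandardTableau (a + 1) (b - 1) n} (hT : T.entries = vContent a b i) :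
    T.row1 (Fin.last a) ∈ Icc 2 b := by
  have h1 : T.entries.count 1 = a := by simp [hT, count_vContent hi hib]
  have hx1 : T.row1 (Fin.last a) ≠ 1 := by
    intro hx
    have := T.count_one_map_row1 hμ
    rw [row1_eq_onesThen hμ T h1, map_univ_onesThen, hx, h1, ← Multiset.replicate_succ,
      Multiset.count_replicate_self] at this
    omega
  have hx : T.row1 (Fin.last a) ∈ vContent a b i :=
    hT ▸ Multiset.mem_add.2 (Or.inl (Multiset.mem_map_of_mem _ (mem_univ_val _)))
  simp only [vContent, Multiset.mem_add, Multiset.mem_replicate, Multiset.mem_cons, mem_val,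
    mem_Icc] at hx ⊢
  omega

theorem exists_entries_eq_vContent (hμ : b - 1 ≤ a) (hn : b ≤ n) (hi : 2 ≤ i) (hib : i ≤ b)
    {x : ℕ} (hx : x ∈ Icc 2 b) :
    ∃ T : TwoRowStandardTableau (a + 1) (b - 1) n,
      T.entries = vContent a b i ∧ T.row1 (Fin.last a) = x := by
  set M := (i ::ₘ (Icc 2 b).val).erase x
  have hxM : x ∈ i ::ₘ (Icc 2 b).val := Multiset.mem_cons_of_mem hx
  have hM : ∀ k ∈ M, 2 ≤ k ∧ k ≤ b := by
    intro k hk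
    have := Multiset.mem_of_mem_erase hk
    simp only [Multiset.mem_cons, mem_val, mem_Icc] at this
    omega
  have hcard : M.card = b - 1 := by
    rw [Multiset.card_erase_of_mem hxM, Multiset.card_cons, card_val, Nat.card_Icc,
      Nat.pred_eq_sub_one]
    simp only [mem_Icc] at hx
    omega
  obtain ⟨f, hf, hfM⟩ := M.exists_monotone_fin_map_univ_eq hcard
  have hfb : ∀ p, 2 ≤ f p ∧ f p ≤ b := fun p =>
    hM _ (hfM ▸ Multiset.mem_map_of_mem _ (mem_univ_val p))
  simp only [mem_Icc] at hx
  refine ⟨⟨onesThen a x, f, fun p => ?_, fun p => ?_, monotone_onesThen (by omega), hf,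
    fun p hp => ?_⟩, ?_, ?_⟩
  · unfold onesThen; split_ifs <;> omega
  · have := hfb p; omega
  · have := hfb p; have := p.2; simp only [onesThen]; split_ifs <;> omega
  · rw [entries, map_univ_onesThen, hfM, Multiset.cons_add, ← Multiset.add_cons,
      Multiset.cons_erase hxM, vContent]
  · simp [onesThen]

end TwoRowStandardTableau

open TwoRowStandardTableau

theorem stmt_9_general (a b i n : ℕ) (hi : 2 ≤ i) (hib : i ≤ b)
    (hμ : b - 1 < a + 1) (hn : a + b ≤ n) :
    Nat.card {T : TwoRowStandardTableau (a + 1) (b - 1) n //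
      ∀ k, T.content k =
        if k = 1 then a else if k = i then 2 else if 2 ≤ k ∧ k ≤ b then 1 else 0} =
      b - 1 := by
  simp_rw [content_eq_iff_entries_eq_vContent hi hib]
  let last : {T : TwoRowStandardTableau (a + 1) (b - 1) n // T.entries = vContent a b i} → ℕ :=
    fun T => T.1.row1 (Fin.last a)
  have hinj : Function.Injective last := fun S T h =>
    Subtype.ext (eq_of_row1_last_eq (by omega) (S.2.trans T.2.symm)
      (by simp [S.2, count_vContent hi hib]) h)
  have hrange : Set.range last = Icc 2 b := by
    ext x
    refine ⟨?_, fun hx => ?_⟩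
    · rintro ⟨T, rfl⟩
      exact row1_last_mem_Icc (by omega) hi hib T.2
    · obtain ⟨T, hT, rfl⟩ :=
        exists_entries_eq_vContent (a := a) (n := n) (by omega) (by omega) hi hib hx
      exact ⟨⟨T, hT⟩, rfl⟩
  rw [← Nat.card_range_of_injective hinj, hrange, Nat.card_coe_set_eq, Set.ncard_coe_finset,
    Nat.card_Icc]
  omega

/-- The number of standard tableaux of shape `μ = (a+1, b-1)` and content
`vᵢ = (a, 1^{i-2}, 2, 1^{b-i})` (entry `1` appearing `a` times, entry `i` twice, and each
other entry of `{2, …, b}` once) is `b - 1`. -/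
theorem stmt_9 (a b i n : ℕ) (hb : 3 ≤ b) (hi : 2 ≤ i) (hib : i ≤ b)
    (hμ : b - 1 < a + 1) (hn : a + b ≤ n) :
    Nat.card {T : TwoRowStandardTableau (a + 1) (b - 1) n //
      ∀ k, T.content k =
        if k = 1 then a else if k = i then 2 else if 2 ≤ k ∧ k ≤ b then 1 else 0} =
      b - 1 :=
  stmt_9_general a b i n hi hib hμ hn
end
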